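/- Let μ > 0 and 0 < d < 1/2. Then for all r ∈ ℝ, φ̄(r; d) ≤ φ_cap(r), where φ_cap(r) = min{(1/2)r², μ}; moreover, equality φ̄(r; d) = φ_cap(r) holds if and only if |r| ≤ 2√(μd) or |r| ≥ √(μ/d), and the inequality is strict for 2√(μd) < |r| < √(μ/d). -/

import Mathlib

/-- The perspective-relaxation loss φ̄(r; d) for parameters μ > 0, d ∈ (0,1/2). -/
noncomputable def phiBar (mu d r : ℝ) : ℝ :=
  if |r| ≤ 2 * Real.sqrt (mu * d) then (1/2) * r^2
  else if |r| < Real.sqrt (mu / d) then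
    (-(d * r^2) + 2 * Real.sqrt (mu * d) * |r| - 2 * mu * d) / (1 - 2*d)
  else mu

/-!
Write `a = √(μd)`, so that `√(μ/d) = a/d`. On the inner region `|r| ≤ 2a` the quadratic `r²/2`
is already below the cap `μ` (as `2μd ≤ μ`), and on the outer region `|r| ≥ a/d` the cap is
active (as `r²/2 ≥ μ/(2d) ≥ μ`); there `φ̄` coincides with the matching branch of the minimum.
In between, the two gaps multiplied by `1 - 2d > 0` are perfect squares:
`(1 - 2d) r²/2 - (1 - 2d) φ̄ = (|r| - 2a)²/2` and `d ((1 - 2d) μ - (1 - 2d) φ̄) = (a - d|r|)²`,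
and both squares are positive strictly inside the region.
-/

open Real

lemma Real.sqrt_div_eq_sqrt_mul_div (x : ℝ) {y : ℝ} (hy : 0 < y) : √(x / y) = √(x * y) / y := by
  rw [← sqrt_sq hy.le, ← sqrt_div' _ (sq_nonneg y), sqrt_sq hy.le]
  congr 1
  field_simp

section

variable {mu d r : ℝ}

lemma half_sq_le_of_abs_le_two_sqrt (hmu : 0 ≤ mu) (hd0 : 0 ≤ d) (hd : d ≤ 1/2)
    (h : |r| ≤ 2 * √(mu * d)) : (1/2) * r ^ 2 ≤ mu := by
  have hsq : r ^ 2 ≤ (2 * √(mu * d)) ^ 2 := sq_abs r ▸ pow_le_pow_left₀ (abs_nonneg r) h 2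
  rw [mul_pow, sq_sqrt (by positivity)] at hsq
  nlinarith

lemma le_half_sq_of_sqrt_div_le_abs (hmu : 0 ≤ mu) (hd0 : 0 < d) (hd : d ≤ 1/2)
    (h : √(mu / d) ≤ |r|) : mu ≤ (1/2) * r ^ 2 := by
  have hsq : mu / d ≤ r ^ 2 := by
    rw [← sq_abs r, ← sq_sqrt (by positivity : 0 ≤ mu / d)]
    exact pow_le_pow_left₀ (sqrt_nonneg _) h 2
  rw [div_le_iff₀ hd0] at hsq
  nlinarith [sq_nonneg r]

lemma phiBar_eq_min_of_abs_le (hmu : 0 ≤ mu) (hd0 : 0 ≤ d) (hd : d ≤ 1/2)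
    (h : |r| ≤ 2 * √(mu * d)) : phiBar mu d r = min ((1/2) * r ^ 2) mu := by
  rw [phiBar, if_pos h, min_eq_left (half_sq_le_of_abs_le_two_sqrt hmu hd0 hd h)]

lemma phiBar_eq_min_of_sqrt_div_le_abs (hmu : 0 ≤ mu) (hd0 : 0 < d) (hd : d ≤ 1/2)
    (h : √(mu / d) ≤ |r|) : phiBar mu d r = min ((1/2) * r ^ 2) mu := by
  by_cases hin : |r| ≤ 2 * √(mu * d)
  · exact phiBar_eq_min_of_abs_le hmu hd0.le hd hin
  · rw [phiBar, if_neg hin, if_neg h.not_gt,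
      min_eq_right (le_half_sq_of_sqrt_div_le_abs hmu hd0 hd h)]

lemma phiBar_lt_min (hmu : 0 ≤ mu) (hd0 : 0 < d) (hd : d < 1/2)
    (h1 : 2 * √(mu * d) < |r|) (h2 : |r| < √(mu / d)) :
    phiBar mu d r < min ((1/2) * r ^ 2) mu := by
  rw [phiBar, if_neg h1.not_ge, if_pos h2]
  set a := √(mu * d)
  have ha : a ^ 2 = mu * d := sq_sqrt (by positivity)
  have hda : d * |r| < a := by
    rwa [sqrt_div_eq_sqrt_mul_div mu hd0, lt_div_iff₀ hd0, mul_comm] at h2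
  have hden : 0 < 1 - 2 * d := by linarith
  rw [lt_min_iff, div_lt_iff₀ hden, div_lt_iff₀ hden]
  constructor
  · have hgap : (1/2) * r ^ 2 * (1 - 2 * d) - (-(d * r ^ 2) + 2 * a * |r| - 2 * mu * d)
        = (|r| - 2 * a) ^ 2 / 2 := by
      rw [← sq_abs r]; linear_combination (-2) * ha
    nlinarith [pow_pos (sub_pos.2 h1) 2]
  · have hgap : d * (mu * (1 - 2 * d) - (-(d * r ^ 2) + 2 * a * |r| - 2 * mu * d))
        = (a - d * |r|) ^ 2 := by
      rw [← sq_abs r]; linear_combination (-1) * ha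
    nlinarith [pow_pos (sub_pos.2 hda) 2]

end

theorem stmt_16 (mu d : ℝ) (hmu : 0 < mu) (hd0 : 0 < d) (hd : d < 1/2) :
    ∀ r : ℝ,
      phiBar mu d r ≤ min ((1/2) * r^2) mu ∧
      (phiBar mu d r = min ((1/2) * r^2) mu ↔
        |r| ≤ 2 * Real.sqrt (mu * d) ∨ Real.sqrt (mu / d) ≤ |r|) ∧
      (2 * Real.sqrt (mu * d) < |r| → |r| < Real.sqrt (mu / d) →
        phiBar mu d r < min ((1/2) * r^2) mu) := by
  intro r
  by_cases hout : |r| ≤ 2 * √(mu * d) ∨ √(mu / d) ≤ |r|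
  · have heq : phiBar mu d r = min ((1/2) * r ^ 2) mu :=
      hout.elim (phiBar_eq_min_of_abs_le hmu.le hd0.le hd.le)
        (phiBar_eq_min_of_sqrt_div_le_abs hmu.le hd0 hd.le)
    exact ⟨heq.le, iff_of_true heq hout,
      fun h1 h2 => (hout.elim h1.not_ge h2.not_ge).elim⟩
  · obtain ⟨h1, h2⟩ := not_or.1 hout
    have hlt := phiBar_lt_min hmu.le hd0 hd (not_le.1 h1) (not_le.1 h2)
    exact ⟨hlt.le, iff_of_false hlt.ne hout, fun _ _ => hlt⟩
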